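/- arXiv:2302.09149 — 2 statements merged into one kernel-verified Lean document; each statement's English description precedes it below -/
import Mathlib

section
/- (Eckart–Young, spectral-norm equality) Let A ∈ ℝ^{N×M} have singular value decomposition A = U S Vᵀ with columns u_i of U, v_i of V and singular values s_1 ≥ … ≥ s_d ≥ 0, d = min(N,M), let r = rank(A), and let 0 < t < r. Define the rank-t truncation A_t = Σ_{i=1}^t s_i u_i v_iᵀ. Then ‖A − A_t‖₂ = s_{t+1}. -/
/-!
Multiplication by orthogonal matrices does not change the ℓ² operator norm, so
`‖A - A_t‖₂ = ‖S - S_t‖₂`, where `S_t` keeps the first `t` columns of `S`. The matrix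
`B = S - S_t` is again diagonal, so `Bᵀ B` is the diagonal matrix of the squared entries
`s_{t+1}², s_{t+2}², …`, and the C⋆-identity `‖B‖² = ‖Bᵀ B‖` gives `‖B‖ = s_{t+1}`.
-/

open Matrix

/-- A singular value decomposition of `A`: `U`, `V` orthogonal, `A = U * S * Vᵀ`,
`S` zero off the diagonal with nonincreasing nonnegative diagonal entries. -/
def IsSVD {N M : ℕ} (A : Matrix (Fin N) (Fin M) ℝ)
    (U : Matrix (Fin N) (Fin N) ℝ) (S : Matrix (Fin N) (Fin M) ℝ)
    (V : Matrix (Fin M) (Fin M) ℝ) : Prop :=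
  Uᵀ * U = 1 ∧ Vᵀ * V = 1 ∧ A = U * S * Vᵀ ∧
  (∀ (i : Fin N) (j : Fin M), (i : ℕ) ≠ (j : ℕ) → S i j = 0) ∧
  (∀ (i : Fin N) (j : Fin M), (i : ℕ) = (j : ℕ) → 0 ≤ S i j) ∧
  (∀ (i i' : Fin N) (j j' : Fin M), (i : ℕ) = (j : ℕ) → (i' : ℕ) = (j' : ℕ) →
    (i : ℕ) ≤ (i' : ℕ) → S i' j' ≤ S i j)

/-- The spectral (ℓ²-operator) norm of a matrix: the operator norm of the induced linear
map between Euclidean spaces. -/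
noncomputable def matrixSpectralNorm {N M : ℕ} (A : Matrix (Fin N) (Fin M) ℝ) : ℝ :=
  ‖LinearMap.toContinuousLinearMap (Matrix.toEuclideanLin A)‖

/-- The Frobenius norm of a matrix. -/
noncomputable def frobeniusNorm {N M : ℕ} (A : Matrix (Fin N) (Fin M) ℝ) : ℝ :=
  Real.sqrt (∑ i, ∑ j, |A i j| ^ 2)

/-- The rank-`t` truncated SVD `A_t = ∑_{i=1}^t sᵢ • uᵢ vᵢᵀ` built from the SVD factors
`U`, `S`, `V`. -/
noncomputable def svdTruncation {N M : ℕ} (U : Matrix (Fin N) (Fin N) ℝ)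
    (S : Matrix (Fin N) (Fin M) ℝ) (V : Matrix (Fin M) (Fin M) ℝ)
    (t : ℕ) (ht : t ≤ min N M) : Matrix (Fin N) (Fin M) ℝ :=
  ∑ i : Fin t,
    S ⟨i, lt_of_lt_of_le i.isLt (ht.trans (min_le_left N M))⟩
      ⟨i, lt_of_lt_of_le i.isLt (ht.trans (min_le_right N M))⟩ •
    vecMulVec (fun a => U a ⟨i, lt_of_lt_of_le i.isLt (ht.trans (min_le_left N M))⟩)
      (fun b => V b ⟨i, lt_of_lt_of_le i.isLt (ht.trans (min_le_right N M))⟩)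

open scoped Matrix.Norms.L2Operator

theorem Fin.sum_eq_dite_of_eq_zero {R : Type*} [AddCommMonoid R] {t : ℕ} (f : Fin t → R) (n : ℕ)
    (hf : ∀ k : Fin t, (k : ℕ) ≠ n → f k = 0) :
    ∑ k, f k = if h : n < t then f ⟨n, h⟩ else 0 := by
  split_ifs with h
  · exact Fintype.sum_eq_single ⟨n, h⟩ fun k hk => hf k fun e => hk (Fin.ext e)
  · exact Finset.sum_eq_zero fun k _ => hf k (by omega)

namespace Matrix

section L2OpNorm

variable {𝕜 : Type*} [RCLike 𝕜] {m n : Type*} [Fintype m] [Fintype n] [DecidableEq n]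

theorem norm_entry_le_l2_opNorm (B : Matrix m n 𝕜) (i : m) (j : n) : ‖B i j‖ ≤ ‖B‖ := by
  have h := l2_opNorm_mulVec B (EuclideanSpace.single j 1)
  rw [PiLp.norm_single, norm_one, mul_one] at h
  refine le_trans ?_ (h.trans' (PiLp.norm_apply_le _ i))
  simp

theorem l2_opNorm_one_le : ‖(1 : Matrix n n 𝕜)‖ ≤ 1 := by
  rw [← diagonal_one, l2_opNorm_diagonal]
  exact (pi_norm_le_iff_of_nonneg zero_le_one).2 fun _ => norm_one.le

theorem l2_opNorm_le_one_of_conjTranspose_mul_self {U : Matrix n n 𝕜} (hU : Uᴴ * U = 1) :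
    ‖U‖ ≤ 1 := by
  have h : ‖U‖ * ‖U‖ ≤ 1 := by
    rw [← l2_opNorm_conjTranspose_mul_self, hU]
    exact l2_opNorm_one_le
  nlinarith [norm_nonneg U]

variable [DecidableEq m]

theorem l2_opNorm_mul_of_conjTranspose_mul_self {U : Matrix m m 𝕜} (hU : Uᴴ * U = 1)
    (B : Matrix m n 𝕜) : ‖U * B‖ = ‖B‖ := by
  have hU1 := l2_opNorm_le_one_of_conjTranspose_mul_self hU
  apply le_antisymm
  · calc ‖U * B‖ ≤ ‖U‖ * ‖B‖ := l2_opNorm_mul U B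
      _ ≤ ‖B‖ := mul_le_of_le_one_left (norm_nonneg B) hU1
  · calc ‖B‖ = ‖Uᴴ * (U * B)‖ := by rw [← Matrix.mul_assoc, hU, Matrix.one_mul]
      _ ≤ ‖Uᴴ‖ * ‖U * B‖ := l2_opNorm_mul _ _
      _ ≤ ‖U * B‖ := by
        rw [l2_opNorm_conjTranspose]
        exact mul_le_of_le_one_left (norm_nonneg _) hU1

theorem l2_opNorm_mul_of_mul_conjTranspose_self {V : Matrix n n 𝕜} (hV : V * Vᴴ = 1)
    (B : Matrix m n 𝕜) : ‖B * V‖ = ‖B‖ := by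
  rw [← l2_opNorm_conjTranspose, conjTranspose_mul,
    l2_opNorm_mul_of_conjTranspose_mul_self (by rwa [conjTranspose_conjTranspose]),
    l2_opNorm_conjTranspose]

end L2OpNorm

theorem l2_opNorm_le_of_offDiag_eq_zero {N M : ℕ} (B : Matrix (Fin N) (Fin M) ℝ)
    (hB : ∀ (i : Fin N) (j : Fin M), (i : ℕ) ≠ j → B i j = 0) {c : ℝ} (hc₀ : 0 ≤ c)
    (hc : ∀ (i : Fin N) (j : Fin M), (i : ℕ) = j → |B i j| ≤ c) : ‖B‖ ≤ c := by
  have hdiag : Bᴴ * B = diagonal fun j => ∑ i, B i j ^ 2 := by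
    ext j k
    rw [conjTranspose_eq_transpose_of_trivial, mul_apply, diagonal_apply]
    split_ifs with hjk
    · simp [hjk, sq]
    · refine Finset.sum_eq_zero fun i _ => ?_
      by_cases hij : (i : ℕ) = j
      · simp [hB i k fun hik => hjk (Fin.ext (hij.symm.trans hik))]
      · simp [hB i j hij]
  have hcol : ∀ j, ‖∑ i, B i j ^ 2‖ ≤ c * c := fun j => by
    rw [Fin.sum_eq_dite_of_eq_zero _ j fun i hij => by simp [hB i j hij]]
    split_ifs with hj
    · rw [norm_pow, Real.norm_eq_abs, sq]
      exact mul_self_le_mul_self (abs_nonneg _) (hc ⟨j, hj⟩ j rfl)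
    · simpa using mul_nonneg hc₀ hc₀
  have h : ‖B‖ * ‖B‖ ≤ c * c := by
    rw [← l2_opNorm_conjTranspose_mul_self, hdiag, l2_opNorm_diagonal]
    exact (pi_norm_le_iff_of_nonneg (mul_nonneg hc₀ hc₀)).2 hcol
  exact (mul_self_le_mul_self_iff (norm_nonneg B) hc₀).2 h

end Matrix

theorem matrixSpectralNorm_eq_l2_opNorm {N M : ℕ} (A : Matrix (Fin N) (Fin M) ℝ) :
    matrixSpectralNorm A = ‖A‖ :=
  rfl

def truncateCols {N M : ℕ} (t : ℕ) (S : Matrix (Fin N) (Fin M) ℝ) : Matrix (Fin N) (Fin M) ℝ :=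
  of fun i j => if (j : ℕ) < t then S i j else 0

theorem truncateCols_eq_sum_single {N M : ℕ} {S : Matrix (Fin N) (Fin M) ℝ}
    (hS : ∀ (i : Fin N) (j : Fin M), (i : ℕ) ≠ j → S i j = 0) {t : ℕ} (hN : t ≤ N) (hM : t ≤ M) :
    truncateCols t S =
      ∑ k : Fin t, S (k.castLE hN) (k.castLE hM) • single (k.castLE hN) (k.castLE hM) 1 := by
  ext i j
  rw [Matrix.sum_apply, Fin.sum_eq_dite_of_eq_zero _ j fun k hk => by
    rw [Matrix.smul_apply, single_apply_of_col_ne _ _ (fun h => hk (congrArg Fin.val h)),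
      smul_zero]]
  by_cases hij : (i : ℕ) = j
  · obtain ⟨i, hi⟩ := i
    subst hij
    split_ifs with hj <;> simp [truncateCols, hj]
  · simp [truncateCols, Fin.ext_iff, Ne.symm hij, hS i j hij]

theorem svdTruncation_eq_mul {N M : ℕ} (U : Matrix (Fin N) (Fin N) ℝ) {S : Matrix (Fin N) (Fin M) ℝ}
    (V : Matrix (Fin M) (Fin M) ℝ) (hS : ∀ (i : Fin N) (j : Fin M), (i : ℕ) ≠ j → S i j = 0)
    {t : ℕ} (ht : t ≤ min N M) :
    svdTruncation U S V t ht = U * truncateCols t S * Vᵀ := by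
  simp only [truncateCols_eq_sum_single hS (ht.trans (min_le_left N M))
      (ht.trans (min_le_right N M)), Matrix.mul_sum, Matrix.sum_mul, Matrix.mul_smul,
    Matrix.smul_mul, single_eq_single_vecMulVec_single, mul_vecMulVec, vecMulVec_mul,
    mulVec_single_one, single_one_vecMul]
  rfl

theorem norm_sub_truncateCols {N M : ℕ} {S : Matrix (Fin N) (Fin M) ℝ}
    (hS : ∀ (i : Fin N) (j : Fin M), (i : ℕ) ≠ j → S i j = 0)
    (hS₀ : ∀ (i : Fin N) (j : Fin M), (i : ℕ) = j → 0 ≤ S i j)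
    (hS_anti : ∀ (i i' : Fin N) (j j' : Fin M), (i : ℕ) = j → (i' : ℕ) = j' → (i : ℕ) ≤ i' →
      S i' j' ≤ S i j)
    {t : ℕ} (htN : t < N) (htM : t < M) :
    ‖S - truncateCols t S‖ = S ⟨t, htN⟩ ⟨t, htM⟩ := by
  have hsub : ∀ i j, (S - truncateCols t S) i j = if (j : ℕ) < t then 0 else S i j := fun i j => by
    by_cases hj : (j : ℕ) < t <;> simp [truncateCols, hj]
  have hst : S ⟨t, htN⟩ ⟨t, htM⟩ = (S - truncateCols t S) ⟨t, htN⟩ ⟨t, htM⟩ := by simp [hsub]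
  refine le_antisymm (l2_opNorm_le_of_offDiag_eq_zero _ (fun i j hij => ?_) (hS₀ _ _ rfl)
    fun i j hij => ?_) ?_
  · simp [hsub, hS i j hij]
  · rw [hsub]
    split_ifs with hj
    · simpa using hS₀ _ _ rfl
    · rw [abs_of_nonneg (hS₀ i j hij)]
      exact hS_anti _ _ _ _ rfl hij (show t ≤ (i : ℕ) by omega)
  · rw [hst]
    exact (Real.le_norm_self _).trans (norm_entry_le_l2_opNorm _ _ _)

theorem eckart_young_spectral_general {N M : ℕ}
    (A : Matrix (Fin N) (Fin M) ℝ) (U : Matrix (Fin N) (Fin N) ℝ)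
    (S : Matrix (Fin N) (Fin M) ℝ) (V : Matrix (Fin M) (Fin M) ℝ)
    (h : IsSVD A U S V) (t : ℕ) (ht : t < min N M) :
    matrixSpectralNorm (A - svdTruncation U S V t ht.le) =
      S ⟨t, lt_of_lt_of_le ht (min_le_left N M)⟩ ⟨t, lt_of_lt_of_le ht (min_le_right N M)⟩ := by
  obtain ⟨hU, hV, rfl, hS, hS₀, hS_anti⟩ := h
  have hU' : Uᴴ * U = 1 := by rwa [conjTranspose_eq_transpose_of_trivial]
  have hV' : Vᵀ * Vᵀᴴ = 1 := by rwa [conjTranspose_eq_transpose_of_trivial, transpose_transpose]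
  rw [matrixSpectralNorm_eq_l2_opNorm, svdTruncation_eq_mul U V hS, ← Matrix.sub_mul,
    ← Matrix.mul_sub, l2_opNorm_mul_of_mul_conjTranspose_self hV',
    l2_opNorm_mul_of_conjTranspose_mul_self hU', norm_sub_truncateCols hS hS₀ hS_anti]

/-- Eckart–Young, spectral-norm equality: for `0 < t < rank A` the
rank-`t` truncated SVD satisfies `‖A − A_t‖₂ = s_{t+1}`. -/
theorem eckart_young_spectral {N M : ℕ}
    (A : Matrix (Fin N) (Fin M) ℝ) (U : Matrix (Fin N) (Fin N) ℝ)
    (S : Matrix (Fin N) (Fin M) ℝ) (V : Matrix (Fin M) (Fin M) ℝ)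
    (h : IsSVD A U S V) (t : ℕ) (ht0 : 0 < t) (htr : t < A.rank) (ht : t < min N M) :
    matrixSpectralNorm (A - svdTruncation U S V t ht.le) =
      S ⟨t, lt_of_lt_of_le ht (min_le_left N M)⟩ ⟨t, lt_of_lt_of_le ht (min_le_right N M)⟩ :=
  eckart_young_spectral_general A U S V h t ht
end

section
/- (Correctness of the incremental SVD column update) Let U ∈ ℝ^{n×k} and V ∈ ℝ^{m×k} have orthonormal columns, let S ∈ ℝ^{k×k} be diagonal, set A = U S Vᵀ, and let B ∈ ℝ^{n×b} be a block of new columns. Define M = UᵀB, P = B − U M, let P̃ ∈ ℝ^{n×b} have orthonormal columns whose span contains the column space of P (so P = P̃ P̃ᵀ P), and set T = P̃ᵀ P. Then the augmented matrix satisfies the exact block factorization [A B] = [U P̃] · [[S, M], [0, T]] · [[V, 0], [0, I_b]]ᵀ. -/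
open Matrix

theorem fromCols_mul_fromBlocks_mul_transpose_fromBlocks_one {R ι κ α β γ δ : Type*} [Semiring R]
    [Fintype α] [Fintype β] [Fintype γ] [Fintype δ] [DecidableEq δ]
    (U : Matrix ι α R) (Q : Matrix ι β R) (S : Matrix α γ R) (M : Matrix α δ R)
    (T : Matrix β δ R) (V : Matrix κ γ R) :
    fromCols U Q * fromBlocks S M 0 T * (fromBlocks V 0 0 (1 : Matrix δ δ R))ᵀ =
      fromCols (U * S * Vᵀ) (U * M + Q * T) := by
  rw [fromBlocks_transpose, transpose_zero, transpose_zero, transpose_one,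
    fromCols_mul_fromBlocks, fromCols_mul_fromBlocks]
  simp [Matrix.mul_assoc]

theorem itSVD_block_factorization_general {n m k b : ℕ}
    (U : Matrix (Fin n) (Fin k) ℝ) (V : Matrix (Fin m) (Fin k) ℝ)
    (S : Matrix (Fin k) (Fin k) ℝ)
    (A : Matrix (Fin n) (Fin m) ℝ) (hA : A = U * S * Vᵀ)
    (B : Matrix (Fin n) (Fin b) ℝ)
    (M : Matrix (Fin k) (Fin b) ℝ)
    (P : Matrix (Fin n) (Fin b) ℝ) (hP : P = B - U * M)
    (Pt : Matrix (Fin n) (Fin b) ℝ)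
    (hspan : P = Pt * Ptᵀ * P)
    (T : Matrix (Fin b) (Fin b) ℝ) (hT : T = Ptᵀ * P) :
    fromCols A B =
      fromCols U Pt * fromBlocks S M 0 T *
        (fromBlocks V 0 0 (1 : Matrix (Fin b) (Fin b) ℝ))ᵀ := by
  have hPtT : Pt * T = P := by rw [hT, ← Matrix.mul_assoc, ← hspan]
  rw [fromCols_mul_fromBlocks_mul_transpose_fromBlocks_one, hPtT, hP, add_sub_cancel, hA]

/-- Correctness of the incremental SVD column update: with `A = U S Vᵀ`
(`U`, `V` having orthonormal columns, `S` diagonal), new columns `B`, `M = Uᵀ B`,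
residual `P = B − U M`, `P̃` with orthonormal columns whose span contains the column space
of `P` (so `P = P̃ P̃ᵀ P`) and `T = P̃ᵀ P`, the augmented matrix satisfies the exact block
factorization `[A B] = [U P̃] · [[S, M], [0, T]] · [[V, 0], [0, I]]ᵀ`. -/
theorem itSVD_block_factorization {n m k b : ℕ}
    (U : Matrix (Fin n) (Fin k) ℝ) (V : Matrix (Fin m) (Fin k) ℝ)
    (S : Matrix (Fin k) (Fin k) ℝ) (hS : S.IsDiag)
    (hU : Uᵀ * U = 1) (hV : Vᵀ * V = 1)
    (A : Matrix (Fin n) (Fin m) ℝ) (hA : A = U * S * Vᵀ)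
    (B : Matrix (Fin n) (Fin b) ℝ)
    (M : Matrix (Fin k) (Fin b) ℝ) (hM : M = Uᵀ * B)
    (P : Matrix (Fin n) (Fin b) ℝ) (hP : P = B - U * M)
    (Pt : Matrix (Fin n) (Fin b) ℝ) (hPt : Ptᵀ * Pt = 1)
    (hspan : P = Pt * Ptᵀ * P)
    (T : Matrix (Fin b) (Fin b) ℝ) (hT : T = Ptᵀ * P) :
    fromCols A B =
      fromCols U Pt * fromBlocks S M 0 T *
        (fromBlocks V 0 0 (1 : Matrix (Fin b) (Fin b) ℝ))ᵀ :=
  itSVD_block_factorization_general U V S A hA B M P hP Pt hspan T hT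
end
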